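/- arXiv:0911.1368 — 3 statements merged into one kernel-verified Lean document; each statement's English description precedes it below -/
import Mathlib

section
/- Let A be the adjacency matrix of a (k,ε)-expander with left degree d and ε < 1/6. Let u, v ∈ ℝⁿ with ‖u‖₁ ≥ ‖v‖₁ − Δ for some Δ > 0. Let S be the set of the k largest-magnitude coefficients of u and S̄ its complement. Assume the inequality ‖Au−Av‖₁ + 2dε‖u−v‖₁ ≥ (1−2ε)d‖(u−v)_S‖₁ holds. Then ‖u−v‖₁ ≤ ((1−2ε)/(1−6ε))·(2‖u_{S̄}‖₁ + Δ) + (2/(d(1−6ε)))·‖Au−Av‖₁. -/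
open scoped Classical

/-!
Write `w = u - v`. Since `‖v‖₁ ≤ ‖u‖₁ + Δ`, the triangle inequality on `S` and on `Sᶜ` puts `w` in
the cone `‖w‖₁ ≤ 2‖w_S‖₁ + 2‖u_{Sᶜ}‖₁ + Δ`. The expander inequality bounds `(1 - 2ε) d ‖w_S‖₁` by
`‖Aw‖₁ + 2dε‖w‖₁`; substituting it, the resulting `4dε‖w‖₁` on the right is absorbed into the
left-hand side `(1 - 2ε) d ‖w‖₁`, which leaves the positive factor `d (1 - 6ε)` as `ε < 1/6`.
-/

open Finset

theorem sum_norm_sub_le_of_compl {ι E : Type*} [Fintype ι] [DecidableEq ι]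
    [SeminormedAddCommGroup E] (S : Finset ι) (u v : ι → E) :
    ∑ i, ‖u i - v i‖ ≤ 2 * ∑ i ∈ S, ‖u i - v i‖ + 2 * ∑ i ∈ Sᶜ, ‖u i‖
      + (∑ i, ‖v i‖ - ∑ i, ‖u i‖) := by
  have head : ∑ i ∈ S, ‖u i‖ ≤ ∑ i ∈ S, ‖v i‖ + ∑ i ∈ S, ‖u i - v i‖ := by
    rw [← sum_add_distrib]
    exact sum_le_sum fun i _ => by linarith [norm_sub_norm_le (u i) (v i)]
  have tail : ∑ i ∈ Sᶜ, ‖u i - v i‖ ≤ ∑ i ∈ Sᶜ, ‖u i‖ + ∑ i ∈ Sᶜ, ‖v i‖ := by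
    rw [← sum_add_distrib]
    exact sum_le_sum fun i _ => norm_sub_le _ _
  rw [← sum_add_sum_compl S (fun i => ‖u i - v i‖), ← sum_add_sum_compl S (fun i => ‖u i‖),
    ← sum_add_sum_compl S (fun i => ‖v i‖)]
  linarith

theorem expander_recovery_general
    (m n : ℕ) (d : ℕ) (ε Δ : ℝ) (A : Matrix (Fin m) (Fin n) ℝ)
    (hd : 0 < (d : ℝ)) (hε : ε < 1/6)
    (u v : Fin n → ℝ) (S : Finset (Fin n))
    (hnorm : ∑ i, |u i| ≥ (∑ i, |v i|) - Δ)
    (haux : ∑ j, |A.mulVec u j - A.mulVec v j| + 2 * d * ε * ∑ i, |u i - v i|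
      ≥ (1 - 2 * ε) * d * ∑ i ∈ S, |u i - v i|) :
    ∑ i, |u i - v i| ≤
      ((1 - 2 * ε) / (1 - 6 * ε)) * (2 * (∑ i ∈ Sᶜ, |u i|) + Δ)
        + (2 / (d * (1 - 6 * ε))) * ∑ j, |A.mulVec u j - A.mulVec v j| := by
  have cone : ∑ i, |u i - v i| ≤ 2 * ∑ i ∈ S, |u i - v i| + (2 * (∑ i ∈ Sᶜ, |u i|) + Δ) := by
    have := sum_norm_sub_le_of_compl S u v
    simp only [Real.norm_eq_abs] at this
    linarith
  set T := ∑ i, |u i - v i|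
  set B := ∑ j, |A.mulVec u j - A.mulVec v j|
  set X := 2 * (∑ i ∈ Sᶜ, |u i|) + Δ
  have key : d * (1 - 6 * ε) * T ≤ (1 - 2 * ε) * d * X + 2 * B := by
    have hcoef : 0 ≤ (1 - 2 * ε) * d := by nlinarith
    nlinarith [mul_le_mul_of_nonneg_left cone hcoef]
  have hpos : 0 < (d : ℝ) * (1 - 6 * ε) := by nlinarith
  calc T ≤ ((1 - 2 * ε) * d * X + 2 * B) / (d * (1 - 6 * ε)) := by
        rwa [le_div_iff₀ hpos, mul_comm]
    _ = _ := by field_simp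

/-- Recovery guarantee (Theorem 1 of the paper) for expander sensing matrices,
    taking the Berinde et al. auxiliary inequality as a hypothesis. -/
theorem expander_recovery
    (m n k : ℕ) (d : ℕ) (ε Δ : ℝ) (A : Matrix (Fin m) (Fin n) ℝ)
    (hd : 0 < (d : ℝ)) (hε0 : 0 ≤ ε) (hε : ε < 1/6) (hΔ : 0 < Δ)
    (u v : Fin n → ℝ) (S : Finset (Fin n)) (hS : S.card = k)
    (hSlargest : ∀ i ∈ S, ∀ j ∉ S, |u j| ≤ |u i|)
    (hnorm : ∑ i, |u i| ≥ (∑ i, |v i|) - Δ)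
    (haux : ∑ j, |A.mulVec u j - A.mulVec v j| + 2 * d * ε * ∑ i, |u i - v i|
      ≥ (1 - 2 * ε) * d * ∑ i ∈ S, |u i - v i|) :
    ∑ i, |u i - v i| ≤
      ((1 - 2 * ε) / (1 - 6 * ε)) * (2 * (∑ i ∈ Sᶜ, |u i|) + Δ)
        + (2 / (d * (1 - 6 * ε))) * ∑ j, |A.mulVec u j - A.mulVec v j| :=
  expander_recovery_general m n d ε Δ A hd hε u v S hnorm haux
end

section
/- Derive the key rearrangement: given real numbers satisfying ‖u‖₁ ≥ ‖v‖₁ − Δ, the triangle-inequality chain ‖v‖₁ ≥ ‖u‖₁ − 2‖u_{S̄}‖₁ + ‖u−v‖₁ − 2‖(u−v)_S‖₁ holds, where S is any index set and S̄ its complement. -/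
/-- The triangle-inequality chain used in the proof of the recovery theorem. -/
theorem triangle_chain
    (n : ℕ) (u v : Fin n → ℝ) (Δ : ℝ) (hΔ : 0 ≤ Δ) (S : Finset (Fin n))
    (hnorm : ∑ i, |u i| ≥ (∑ i, |v i|) - Δ) :
    ∑ i, |v i| ≥
      (∑ i, |u i|) - 2 * (∑ i ∈ Sᶜ, |u i|) + (∑ i, |u i - v i|)
        - 2 * ∑ i ∈ S, |u i - v i| := by
  have hu : ∑ i, |u i| = ∑ i ∈ S, |u i| + ∑ i ∈ Sᶜ, |u i| :=
    (Finset.sum_add_sum_compl S _).symm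
  have hd : ∑ i, |u i - v i| = ∑ i ∈ S, |u i - v i| + ∑ i ∈ Sᶜ, |u i - v i| :=
    (Finset.sum_add_sum_compl S _).symm
  have hv : ∑ i, |v i| = ∑ i ∈ S, |v i| + ∑ i ∈ Sᶜ, |v i| :=
    (Finset.sum_add_sum_compl S _).symm
  have h1 : ∑ i ∈ S, |v i| ≥ ∑ i ∈ S, (|u i| - |u i - v i|) := by
    apply Finset.sum_le_sum
    intro i _
    have := abs_sub_abs_le_abs_sub (u i) (v i)
    linarith
  have h2 : ∑ i ∈ Sᶜ, |v i| ≥ ∑ i ∈ Sᶜ, (|u i - v i| - |u i|) := by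
    apply Finset.sum_le_sum
    intro i _
    have := abs_sub_abs_le_abs_sub (u i - v i) (u i)
    have : |u i - v i| - |u i| ≤ |u i - v i - u i| := this
    have h3 : |u i - v i - u i| = |v i| := by
      rw [show u i - v i - u i = -v i by ring, abs_neg]
    linarith
  rw [Finset.sum_sub_distrib] at h1 h2
  linarith
end

section
/- Let Φ be a nonnegative m×n matrix with ‖Φx‖₁ ≤ ‖x‖₁ for all x, let α* ∈ ℝⁿ₊, and let x ∈ ℝⁿ₊ satisfy (Φx)_j ≥ λ/d for all j, where λ, d > 0. Then the KL divergence between the product Poisson distributions with means Φα* and Φx satisfies KL ≤ (d/λ)·‖α* − x‖₁². -/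
open Finset

lemma mul_log_div_sub_add_le_sq_div {a b : ℝ} (ha : 0 ≤ a) (hb : 0 < b) :
    a * Real.log (a / b) - a + b ≤ (a - b) ^ 2 / b := by
  rcases ha.eq_or_lt with rfl | ha
  · simp [sq, hb.ne']
  have hlog : a * Real.log (a / b) ≤ a * (a / b - 1) :=
    mul_le_mul_of_nonneg_left (Real.log_le_sub_one_of_pos (div_pos ha hb)) ha.le
  have hsq : a * (a / b - 1) - a + b = (a - b) ^ 2 / b := by
    field_simp
    ring
  linarith

lemma sum_mul_log_div_sub_add_le {ι : Type*} [Fintype ι] {a b : ι → ℝ} {c : ℝ} (hc : 0 < c)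
    (ha : ∀ j, 0 ≤ a j) (hb : ∀ j, c ≤ b j) :
    ∑ j, (a j * Real.log (a j / b j) - a j + b j) ≤ c⁻¹ * (∑ j, |a j - b j|) ^ 2 :=
  calc ∑ j, (a j * Real.log (a j / b j) - a j + b j)
      ≤ ∑ j, (a j - b j) ^ 2 / b j :=
        sum_le_sum fun j _ => mul_log_div_sub_add_le_sq_div (ha j) (hc.trans_le (hb j))
    _ ≤ ∑ j, (a j - b j) ^ 2 / c := by gcongr with j; exact hb j
    _ = c⁻¹ * ∑ j, |a j - b j| ^ 2 := by simp_rw [mul_sum, sq_abs, div_eq_inv_mul]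
    _ ≤ c⁻¹ * (∑ j, |a j - b j|) ^ 2 := by
        gcongr
        exact sum_sq_le_sq_sum_of_nonneg fun j _ => abs_nonneg _

theorem poisson_kl_bound_general
    (m n : ℕ) (Φ : Matrix (Fin m) (Fin n) ℝ) (lam d : ℝ)
    (hlam : 0 < lam) (hd : 0 < d)
    (hΦ : ∀ j i, 0 ≤ Φ j i)
    (hnonexp : ∀ y : Fin n → ℝ, ∑ j, |Φ.mulVec y j| ≤ ∑ i, |y i|)
    (α x : Fin n → ℝ) (hα : ∀ i, 0 ≤ α i)
    (hfloor : ∀ j, lam / d ≤ Φ.mulVec x j) :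
    ∑ j, (Φ.mulVec α j * Real.log (Φ.mulVec α j / Φ.mulVec x j)
          - Φ.mulVec α j + Φ.mulVec x j)
      ≤ (d / lam) * (∑ i, |α i - x i|) ^ 2 := by
  have hΦα : ∀ j, 0 ≤ Φ.mulVec α j := fun j =>
    dotProduct_nonneg_of_nonneg (hΦ j) hα
  have hΦdiff : ∑ j, |Φ.mulVec α j - Φ.mulVec x j| ≤ ∑ i, |α i - x i| := by
    simpa only [Matrix.mulVec_sub, Pi.sub_apply] using hnonexp (α - x)
  calc _ ≤ (lam / d)⁻¹ * (∑ j, |Φ.mulVec α j - Φ.mulVec x j|) ^ 2 :=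
        sum_mul_log_div_sub_add_le (div_pos hlam hd) hΦα hfloor
    _ ≤ (d / lam) * (∑ i, |α i - x i|) ^ 2 := by
        rw [inv_div]
        gcongr

/-- Lemma 4: KL divergence bound for Poisson compressed sensing with an
    ℓ₁-nonexpansive nonnegative sensing matrix. -/
theorem poisson_kl_bound
    (m n : ℕ) (Φ : Matrix (Fin m) (Fin n) ℝ) (lam d : ℝ)
    (hlam : 0 < lam) (hd : 0 < d)
    (hΦ : ∀ j i, 0 ≤ Φ j i)
    (hnonexp : ∀ y : Fin n → ℝ, ∑ j, |Φ.mulVec y j| ≤ ∑ i, |y i|)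
    (α x : Fin n → ℝ) (hα : ∀ i, 0 ≤ α i) (hx : ∀ i, 0 ≤ x i)
    (hfloor : ∀ j, lam / d ≤ Φ.mulVec x j) :
    ∑ j, (Φ.mulVec α j * Real.log (Φ.mulVec α j / Φ.mulVec x j)
          - Φ.mulVec α j + Φ.mulVec x j)
      ≤ (d / lam) * (∑ i, |α i - x i|) ^ 2 :=
  poisson_kl_bound_general m n Φ lam d hlam hd hΦ hnonexp α x hα hfloor
end
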